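/- arXiv:2603.29925 — 5 statements merged into one kernel-verified Lean document; each statement's English description precedes it below -/
import Mathlib

section
/- Let a, ν, v : ℕ → ℕ satisfy: v 5 ≥ 3 and ν 5 ≥ 26, and for every natural number n with 6 ≤ n ≤ 12: (i) a (n−1) ≥ ν (n−1) + 1; (ii) 2·(n−1)·(v n) ≥ a (n−1) · v (n−1); (iii) ν n + 2·n ≥ 2·ν (n−1) + 5; (iv) ν n ≥ a (n−1) + v n. Then v 7 ≥ 35. -/
/-- Lower bound for the number of ideal vertices in dimension 7. -/
theorem ideal_vertices_dim7 (a ν v : ℕ → ℕ)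
    (hv5 : 3 ≤ v 5) (hν5 : 26 ≤ ν 5)
    (hi : ∀ n : ℕ, 6 ≤ n → n ≤ 12 → ν (n - 1) + 1 ≤ a (n - 1))
    (hii : ∀ n : ℕ, 6 ≤ n → n ≤ 12 → a (n - 1) * v (n - 1) ≤ 2 * (n - 1) * v n)
    (hiii : ∀ n : ℕ, 6 ≤ n → n ≤ 12 → 2 * ν (n - 1) + 5 ≤ ν n + 2 * n)
    (hiv : ∀ n : ℕ, 6 ≤ n → n ≤ 12 → a (n - 1) + v n ≤ ν n) :
    35 ≤ v 7 := by
  have h1 := hi 6 (by norm_num) (by norm_num)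
  have h2 := hii 6 (by norm_num) (by norm_num)
  have h3 := hiii 6 (by norm_num) (by norm_num)
  have h4 := hi 7 (by norm_num) (by norm_num)
  have h5 := hii 7 (by norm_num) (by norm_num)
  norm_num at h1 h2 h3 h4 h5
  have ha5 : 27 ≤ a 5 := by omega
  have hq : 81 ≤ a 5 * v 5 := by
    calc 81 = 27 * 3 := by norm_num
    _ ≤ a 5 * v 5 := Nat.mul_le_mul ha5 hv5
  have hv6 : 9 ≤ v 6 := by omega
  have ha6 : 46 ≤ a 6 := by omega
  have hq2 : 414 ≤ a 6 * v 6 := by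
    calc 414 = 46 * 9 := by norm_num
    _ ≤ a 6 * v 6 := Nat.mul_le_mul ha6 hv6
  omega
end

section
/- Let a, ν, v : ℕ → ℕ satisfy: v 5 ≥ 3 and ν 5 ≥ 26, and for every natural number n with 6 ≤ n ≤ 12: (i) a (n−1) ≥ ν (n−1) + 1; (ii) 2·(n−1)·(v n) ≥ a (n−1) · v (n−1); (iii) ν n + 2·n ≥ 2·ν (n−1) + 5; (iv) ν n ≥ a (n−1) + v n. Then v 8 ≥ 205. -/
/-- Lower bound for the number of ideal vertices in dimension 8. -/
theorem ideal_vertices_dim8 (a ν v : ℕ → ℕ)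
    (hv5 : 3 ≤ v 5) (hν5 : 26 ≤ ν 5)
    (hi : ∀ n : ℕ, 6 ≤ n → n ≤ 12 → ν (n - 1) + 1 ≤ a (n - 1))
    (hii : ∀ n : ℕ, 6 ≤ n → n ≤ 12 → a (n - 1) * v (n - 1) ≤ 2 * (n - 1) * v n)
    (hiii : ∀ n : ℕ, 6 ≤ n → n ≤ 12 → 2 * ν (n - 1) + 5 ≤ ν n + 2 * n)
    (hiv : ∀ n : ℕ, 6 ≤ n → n ≤ 12 → a (n - 1) + v n ≤ ν n) :
    205 ≤ v 8 := by
  have ha5 : 27 ≤ a 5 := by have := hi 6 (by norm_num) (by norm_num); norm_num at this; omega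
  have h6 : a 5 * v 5 ≤ 2 * 5 * v 6 := hii 6 (by norm_num) (by norm_num)
  have hm6 : 27 * 3 ≤ a 5 * v 5 := Nat.mul_le_mul ha5 hv5
  have hv6 : 9 ≤ v 6 := by omega
  have hν6 : 45 ≤ ν 6 := by have := hiii 6 (by norm_num) (by norm_num); norm_num at this; omega
  have ha6 : 46 ≤ a 6 := by have := hi 7 (by norm_num) (by norm_num); norm_num at this; omega
  have h7 : a 6 * v 6 ≤ 2 * 6 * v 7 := hii 7 (by norm_num) (by norm_num)
  have hm7 : 46 * 9 ≤ a 6 * v 6 := Nat.mul_le_mul ha6 hv6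
  have hv7 : 35 ≤ v 7 := by omega
  have hν7 : 81 ≤ ν 7 := by have := hiv 7 (by norm_num) (by norm_num); norm_num at this; omega
  have ha7 : 82 ≤ a 7 := by have := hi 8 (by norm_num) (by norm_num); norm_num at this; omega
  have h8 : a 7 * v 7 ≤ 2 * 7 * v 8 := hii 8 (by norm_num) (by norm_num)
  have hm8 : 82 * 35 ≤ a 7 * v 7 := Nat.mul_le_mul ha7 hv7
  omega
end

section
/- Let a, ν, v : ℕ → ℕ satisfy: v 5 ≥ 3 and ν 5 ≥ 26, and for every natural number n with 6 ≤ n ≤ 12: (i) a (n−1) ≥ ν (n−1) + 1; (ii) 2·(n−1)·(v n) ≥ a (n−1) · v (n−1); (iii) ν n + 2·n ≥ 2·ν (n−1) + 5; (iv) ν n ≥ a (n−1) + v n. Then v 9 ≥ 3690. -/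
/-- Lower bound for the number of ideal vertices in dimension 9. -/
theorem ideal_vertices_dim9 (a ν v : ℕ → ℕ)
    (hv5 : 3 ≤ v 5) (hν5 : 26 ≤ ν 5)
    (hi : ∀ n : ℕ, 6 ≤ n → n ≤ 12 → ν (n - 1) + 1 ≤ a (n - 1))
    (hii : ∀ n : ℕ, 6 ≤ n → n ≤ 12 → a (n - 1) * v (n - 1) ≤ 2 * (n - 1) * v n)
    (hiii : ∀ n : ℕ, 6 ≤ n → n ≤ 12 → 2 * ν (n - 1) + 5 ≤ ν n + 2 * n)
    (hiv : ∀ n : ℕ, 6 ≤ n → n ≤ 12 → a (n - 1) + v n ≤ ν n) :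
    3690 ≤ v 9 := by
  have ha5 : 27 ≤ a 5 := by have := hi 6 (by norm_num) (by norm_num); norm_num at this; omega
  have hv6 : 9 ≤ v 6 := by
    have h := hii 6 (by norm_num) (by norm_num); norm_num at h
    have := le_trans (Nat.mul_le_mul ha5 hv5) h
    omega
  have hν6 : 45 ≤ ν 6 := by have := hiii 6 (by norm_num) (by norm_num); norm_num at this; omega
  have ha6 : 46 ≤ a 6 := by have := hi 7 (by norm_num) (by norm_num); norm_num at this; omega
  have hv7 : 35 ≤ v 7 := by
    have h := hii 7 (by norm_num) (by norm_num); norm_num at h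
    have := le_trans (Nat.mul_le_mul ha6 hv6) h
    omega
  have hν7 : 81 ≤ ν 7 := by have := hiv 7 (by norm_num) (by norm_num); norm_num at this; omega
  have ha7 : 82 ≤ a 7 := by have := hi 8 (by norm_num) (by norm_num); norm_num at this; omega
  have hv8 : 205 ≤ v 8 := by
    have h := hii 8 (by norm_num) (by norm_num); norm_num at h
    have := le_trans (Nat.mul_le_mul ha7 hv7) h
    omega
  have hν8 : 287 ≤ ν 8 := by have := hiv 8 (by norm_num) (by norm_num); norm_num at this; omega
  have ha8 : 288 ≤ a 8 := by have := hi 9 (by norm_num) (by norm_num); norm_num at this; omega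
  have h := hii 9 (by norm_num) (by norm_num); norm_num at h
  have := le_trans (Nat.mul_le_mul ha8 hv8) h
  omega
end

section
/- Let a, ν, v : ℕ → ℕ satisfy: v 5 ≥ 3 and ν 5 ≥ 26, and for every natural number n with 6 ≤ n ≤ 12: (i) a (n−1) ≥ ν (n−1) + 1; (ii) 2·(n−1)·(v n) ≥ a (n−1) · v (n−1); (iii) ν n + 2·n ≥ 2·ν (n−1) + 5; (iv) ν n ≥ a (n−1) + v n. Then v 10 ≥ 815695. -/
/-- Lower bound for the number of ideal vertices in dimension 10. -/
theorem ideal_vertices_dim10 (a ν v : ℕ → ℕ)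
    (hv5 : 3 ≤ v 5) (hν5 : 26 ≤ ν 5)
    (hi : ∀ n : ℕ, 6 ≤ n → n ≤ 12 → ν (n - 1) + 1 ≤ a (n - 1))
    (hii : ∀ n : ℕ, 6 ≤ n → n ≤ 12 → a (n - 1) * v (n - 1) ≤ 2 * (n - 1) * v n)
    (hiii : ∀ n : ℕ, 6 ≤ n → n ≤ 12 → 2 * ν (n - 1) + 5 ≤ ν n + 2 * n)
    (hiv : ∀ n : ℕ, 6 ≤ n → n ≤ 12 → a (n - 1) + v n ≤ ν n) :
    815695 ≤ v 10 := by
  have hi6 := hi 6 (by norm_num) (by norm_num)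
  have hii6 := hii 6 (by norm_num) (by norm_num)
  have hiii6 := hiii 6 (by norm_num) (by norm_num)
  have hiv6 := hiv 6 (by norm_num) (by norm_num)
  have hi7 := hi 7 (by norm_num) (by norm_num)
  have hii7 := hii 7 (by norm_num) (by norm_num)
  have hiii7 := hiii 7 (by norm_num) (by norm_num)
  have hiv7 := hiv 7 (by norm_num) (by norm_num)
  have hi8 := hi 8 (by norm_num) (by norm_num)
  have hii8 := hii 8 (by norm_num) (by norm_num)
  have hiii8 := hiii 8 (by norm_num) (by norm_num)
  have hiv8 := hiv 8 (by norm_num) (by norm_num)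
  have hi9 := hi 9 (by norm_num) (by norm_num)
  have hii9 := hii 9 (by norm_num) (by norm_num)
  have hiii9 := hiii 9 (by norm_num) (by norm_num)
  have hiv9 := hiv 9 (by norm_num) (by norm_num)
  have hi10 := hi 10 (by norm_num) (by norm_num)
  have hii10 := hii 10 (by norm_num) (by norm_num)
  simp only [show (6:ℕ)-1 = 5 from rfl, show (7:ℕ)-1 = 6 from rfl,
    show (8:ℕ)-1 = 7 from rfl, show (9:ℕ)-1 = 8 from rfl,
    show (10:ℕ)-1 = 9 from rfl] at *
  have ha5 : 27 ≤ a 5 := by omega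
  have hv6 : 9 ≤ v 6 := by
    have := le_trans (Nat.mul_le_mul ha5 hv5) hii6
    omega
  have hν6 : 45 ≤ ν 6 := by omega
  have ha6 : 46 ≤ a 6 := by omega
  have hv7 : 35 ≤ v 7 := by
    have := le_trans (Nat.mul_le_mul ha6 hv6) hii7
    omega
  have hν7 : 81 ≤ ν 7 := by omega
  have ha7 : 82 ≤ a 7 := by omega
  have hv8 : 205 ≤ v 8 := by
    have := le_trans (Nat.mul_le_mul ha7 hv7) hii8
    omega
  have hν8 : 287 ≤ ν 8 := by omega
  have ha8 : 288 ≤ a 8 := by omega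
  have hv9 : 3690 ≤ v 9 := by
    have := le_trans (Nat.mul_le_mul ha8 hv8) hii9
    omega
  have hν9 : 3978 ≤ ν 9 := by omega
  have ha9 : 3979 ≤ a 9 := by omega
  have := le_trans (Nat.mul_le_mul ha9 hv9) hii10
  omega
end

section
/- Let a, ν, v : ℕ → ℕ satisfy: v 5 ≥ 3 and ν 5 ≥ 26, and for every natural number n with 6 ≤ n ≤ 12: (i) a (n−1) ≥ ν (n−1) + 1; (ii) 2·(n−1)·(v n) ≥ a (n−1) · v (n−1); (iii) ν n + 2·n ≥ 2·ν (n−1) + 5; (iv) ν n ≥ a (n−1) + v n. Then v 11 ≥ 33430239957. -/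
/-- Lower bound for the number of ideal vertices in dimension 11. -/
theorem ideal_vertices_dim11 (a ν v : ℕ → ℕ)
    (hv5 : 3 ≤ v 5) (hν5 : 26 ≤ ν 5)
    (hi : ∀ n : ℕ, 6 ≤ n → n ≤ 12 → ν (n - 1) + 1 ≤ a (n - 1))
    (hii : ∀ n : ℕ, 6 ≤ n → n ≤ 12 → a (n - 1) * v (n - 1) ≤ 2 * (n - 1) * v n)
    (hiii : ∀ n : ℕ, 6 ≤ n → n ≤ 12 → 2 * ν (n - 1) + 5 ≤ ν n + 2 * n)
    (hiv : ∀ n : ℕ, 6 ≤ n → n ≤ 12 → a (n - 1) + v n ≤ ν n) :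
    33430239957 ≤ v 11 := by
  have step : ∀ n : ℕ, 6 ≤ n → n ≤ 12 → ∀ V N : ℕ, V ≤ v (n-1) → N ≤ ν (n-1) →
      (N+1) * V ≤ 2 * (n-1) * v n ∧ N + 1 ≤ a (n-1) := by
    intro n h6 h12 V N hV hN
    have ha := hi n h6 h12
    have h2 := hii n h6 h12
    constructor
    · calc (N+1) * V ≤ a (n-1) * v (n-1) :=
            Nat.mul_le_mul (le_trans (by omega) ha) hV
        _ ≤ 2 * (n-1) * v n := h2
    · omega
  -- n = 6
  obtain ⟨h6m, ha5⟩ := step 6 (by norm_num) (by norm_num) 3 26 hv5 hν5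
  norm_num at h6m ha5
  have hv6 : 9 ≤ v 6 := by omega
  have hν6 : 45 ≤ ν 6 := by
    have := hiii 6 (by norm_num) (by norm_num); norm_num at this; omega
  -- n = 7
  obtain ⟨h7m, ha6⟩ := step 7 (by norm_num) (by norm_num) 9 45 hv6 hν6
  norm_num at h7m ha6
  have hv7 : 35 ≤ v 7 := by omega
  have hν7 : 81 ≤ ν 7 := by
    have := hiv 7 (by norm_num) (by norm_num); norm_num at this; omega
  -- n = 8
  obtain ⟨h8m, ha7⟩ := step 8 (by norm_num) (by norm_num) 35 81 hv7 hν7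
  norm_num at h8m ha7
  have hv8 : 205 ≤ v 8 := by omega
  have hν8 : 287 ≤ ν 8 := by
    have := hiv 8 (by norm_num) (by norm_num); norm_num at this; omega
  -- n = 9
  obtain ⟨h9m, ha8⟩ := step 9 (by norm_num) (by norm_num) 205 287 hv8 hν8
  norm_num at h9m ha8
  have hv9 : 3690 ≤ v 9 := by omega
  have hν9 : 3978 ≤ ν 9 := by
    have := hiv 9 (by norm_num) (by norm_num); norm_num at this; omega
  -- n = 10
  obtain ⟨h10m, ha9⟩ := step 10 (by norm_num) (by norm_num) 3690 3978 hv9 hν9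
  norm_num at h10m ha9
  have hv10 : 815695 ≤ v 10 := by omega
  have hν10 : 819674 ≤ ν 10 := by
    have := hiv 10 (by norm_num) (by norm_num); norm_num at this; omega
  -- n = 11
  obtain ⟨h11m, ha10⟩ := step 11 (by norm_num) (by norm_num) 815695 819674 hv10 hν10
  norm_num at h11m ha10
  omega
end
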